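/- arXiv:1512.06293 — 3 statements merged into one kernel-verified Lean document; each statement's English description precedes it below -/
import Mathlib

section
/- For each k = 1, …, n, let {g_{λ_k}}_{λ_k∈Λ_k} ⊆ L¹(ℝ^d) ∩ L²(ℝ^d), Λ_k countable, satisfy the Bessel bound Σ_{λ_k∈Λ_k} ‖f∗g_{λ_k}‖₂² ≤ B_k‖f‖₂² for all f ∈ L²(ℝ^d); let M_k, P_k : L²(ℝ^d) → L²(ℝ^d) be Lipschitz with constants L_k and R_k respectively, with M_k0 = 0 and P_k0 = 0, and let S_k ≥ 1. Define U_k[λ_k]f := S_k^{d/2} P_k(M_k(f∗g_{λ_k}))(S_k·) and, for a path q = (λ₁,…,λ_n) ∈ Λ₁×⋯×Λ_n, U[q]f := U_n[λ_n]⋯U₁[λ₁]f. Then for every such path q and every f ∈ L²(ℝ^d): ‖U[q]f‖₂² ≤ (∏_{k=1}^n B_k L_k² R_k²) ‖f‖₂². -/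
open MeasureTheory
open scoped ENNReal FourierTransform

noncomputable section

/-- `ℝ^d` as a Euclidean space. -/
abbrev Ed (d : ℕ) : Type := EuclideanSpace ℝ (Fin d)

/-- Convolution `(f ∗ g)(x) = ∫ f(y) g(x − y) dy`. -/
def convol {d : ℕ} (f g : Ed d → ℂ) : Ed d → ℂ := fun x => ∫ y, f y * g (x - y)

/-- One network layer: `U[λ]f = S^{d/2} · P(M(f ∗ g))(S·)`. -/
def layerU {d : ℕ} (S : ℝ) (P M : (Ed d → ℂ) → (Ed d → ℂ)) (g : Ed d → ℂ)
    (f : Ed d → ℂ) : Ed d → ℂ :=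
  fun x => ((S ^ ((d : ℝ) / 2) : ℝ) : ℂ) * P (M (convol f g)) (S • x)

/-!
Each layer is L²-bounded with constant `B L² R²`: the convolution with `g_λ` has squared norm
at most `B ‖f‖²` (a single term of the Bessel sum), the nonlinearities vanish at `0`, so their
Lipschitz bounds become norm bounds, and the normalised dilation `S^{d/2} F(S ·)` is an
L²-isometry because `x ↦ S x` scales Lebesgue measure by `S⁻ᵈ`. Composing the layers along the
path multiplies the constants.
-/

theorem ENNReal.ofReal_mul_ofReal_le (a b : ℝ) :
    ENNReal.ofReal a * ENNReal.ofReal b ≤ ENNReal.ofReal (a * b) := by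
  rcases le_or_gt 0 a with ha | ha
  · rw [ENNReal.ofReal_mul ha]
  · simp [ENNReal.ofReal_of_nonpos ha.le]

theorem ENNReal.prod_ofReal_le_ofReal_prod {ι : Type*} (s : Finset ι) (f : ι → ℝ) :
    ∏ i ∈ s, ENNReal.ofReal (f i) ≤ ENNReal.ofReal (∏ i ∈ s, f i) := by
  classical
  induction s using Finset.induction_on with
  | empty => simp
  | insert a s ha ih =>
    rw [Finset.prod_insert ha, Finset.prod_insert ha]
    exact (mul_le_mul_right ih _).trans (ofReal_mul_ofReal_le _ _)

theorem ENNReal.ofReal_pow_le (a : ℝ) (n : ℕ) : ENNReal.ofReal a ^ n ≤ ENNReal.ofReal (a ^ n) := by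
  simpa using ENNReal.prod_ofReal_le_ofReal_prod (Finset.range n) fun _ => a

theorem Fin.foldl_le_prod_mul {α : Type*} {n : ℕ} (T : Fin n → α → α) (p : α → Prop)
    (N : α → ℝ≥0∞) (c : Fin n → ℝ≥0∞) (hT : ∀ k x, p x → p (T k x))
    (hN : ∀ k x, p x → N (T k x) ≤ c k * N x) {x : α} (hx : p x) :
    N (Fin.foldl n (fun y k => T k y) x) ≤ (∏ k, c k) * N x := by
  induction n generalizing x with
  | zero => simp
  | succ n ih =>
    rw [Fin.foldl_succ, Fin.prod_univ_succ]
    calc N (Fin.foldl n (fun y k => T k.succ y) (T 0 x))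
        ≤ (∏ k : Fin n, c k.succ) * N (T 0 x) :=
          ih (fun k => T k.succ) (fun k => c k.succ) (fun k => hT k.succ) (fun k => hN k.succ)
            (hT 0 x hx)
      _ ≤ (∏ k : Fin n, c k.succ) * (c 0 * N x) := by gcongr; exact hN 0 x hx
      _ = c 0 * (∏ k : Fin n, c k.succ) * N x := by ring

section Dilation

variable {E F : Type*} [NormedAddCommGroup E] [NormedSpace ℝ E] [MeasurableSpace E]
  [BorelSpace E] [FiniteDimensional ℝ E] (μ : Measure E) [μ.IsAddHaarMeasure]
  [NormedAddCommGroup F]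

theorem eLpNorm_comp_smul_sq {G : E → F} (hG : AEStronglyMeasurable G μ) {S : ℝ} (hS : S ≠ 0) :
    eLpNorm (fun x => G (S • x)) 2 μ ^ 2
      = ENNReal.ofReal (|S| ^ Module.finrank ℝ E)⁻¹ * eLpNorm G 2 μ ^ 2 := by
  have hmap := Measure.map_addHaar_smul μ hS
  have hG' : AEStronglyMeasurable G (Measure.map (S • ·) μ) := by
    rw [hmap]; exact hG.mono_ac Measure.smul_absolutelyContinuous
  rw [← Function.comp_def, ← eLpNorm_map_measure hG' (measurable_const_smul S).aemeasurable, hmap,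
    eLpNorm_smul_measure_of_ne_top (by norm_num), smul_eq_mul, mul_pow,
    ← ENNReal.rpow_natCast, ← ENNReal.rpow_mul]
  norm_num

end Dilation

def normalizedDilation {d : ℕ} (S : ℝ) (F : Ed d → ℂ) : Ed d → ℂ :=
  ((S ^ ((d : ℝ) / 2) : ℝ) : ℂ) • fun x => F (S • x)

theorem eLpNorm_normalizedDilation {d : ℕ} {F : Ed d → ℂ} (hF : AEStronglyMeasurable F volume)
    {S : ℝ} (hS : 0 < S) :
    eLpNorm (normalizedDilation S F) 2 volume = eLpNorm F 2 volume := by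
  refine (ENNReal.pow_right_strictMono two_ne_zero).injective ?_
  have hc : ‖((S ^ ((d : ℝ) / 2) : ℝ) : ℂ)‖ₑ ^ 2 = ENNReal.ofReal (S ^ d) := by
    rw [← ofReal_norm, Complex.norm_real, Real.norm_of_nonneg (by positivity),
      ← ENNReal.ofReal_pow (by positivity), ← Real.rpow_natCast, ← Real.rpow_mul hS.le]
    norm_num
  have hSd : 0 < S ^ d := pow_pos hS d
  rw [normalizedDilation, eLpNorm_const_smul, mul_pow, eLpNorm_comp_smul_sq volume hF hS.ne',
    finrank_euclideanSpace_fin, hc, ← mul_assoc, ← ENNReal.ofReal_mul hSd.le, abs_of_pos hS,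
    mul_inv_cancel₀ hSd.ne', ENNReal.ofReal_one, one_mul]

theorem MeasureTheory.MemLp.normalizedDilation {d : ℕ} {F : Ed d → ℂ} (hF : MemLp F 2 volume)
    {S : ℝ} (hS : 0 < S) : MemLp (normalizedDilation S F) 2 volume := by
  refine ⟨(hF.1.comp_quasiMeasurePreserving
    (Measure.quasiMeasurePreserving_smul volume hS.ne')).const_mul _, ?_⟩
  rw [eLpNorm_normalizedDilation hF.1 hS]
  exact hF.2

theorem eLpNorm_apply_le_of_lipschitz_of_map_zero {α E F : Type*} [MeasurableSpace α]
    {μ : Measure α} {p : ℝ≥0∞} [NormedAddCommGroup E] [NormedAddCommGroup F]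
    {T : (α → E) → α → F} {L : ℝ}
    (hT : ∀ f h, MemLp f p μ → MemLp h p μ →
      eLpNorm (T f - T h) p μ ≤ ENNReal.ofReal L * eLpNorm (f - h) p μ)
    (hT0 : T 0 = 0) {f : α → E} (hf : MemLp f p μ) :
    eLpNorm (T f) p μ ≤ ENNReal.ofReal L * eLpNorm f p μ := by
  simpa [hT0] using hT f 0 hf MemLp.zero

section Layer

open ENNReal (ofReal)

variable {d : ℕ} {f g : Ed d → ℂ} {B L R S : ℝ} {P M : (Ed d → ℂ) → Ed d → ℂ}

theorem aestronglyMeasurable_convol (hf : AEStronglyMeasurable f volume)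
    (hg : AEStronglyMeasurable g volume) : AEStronglyMeasurable (convol f g) volume :=
  (hf.convolution_integrand (ContinuousLinearMap.mul ℂ ℂ) hg (μ := volume)
    (ν := volume)).integral_prod_right'

theorem memLp_convol (hf : MemLp f 2 volume) (hg : AEStronglyMeasurable g volume)
    (hconv : eLpNorm (convol f g) 2 volume ^ 2 ≤ ofReal B * eLpNorm f 2 volume ^ 2) :
    MemLp (convol f g) 2 volume := by
  refine ⟨aestronglyMeasurable_convol hf.1 hg, ?_⟩
  have hsq : eLpNorm (convol f g) 2 volume ^ 2 < ⊤ :=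
    hconv.trans_lt (ENNReal.mul_lt_top ENNReal.ofReal_lt_top (ENNReal.pow_lt_top hf.2))
  simpa [ENNReal.pow_lt_top_iff] using hsq

theorem layerU_eq_normalizedDilation :
    layerU S P M g f = normalizedDilation S (P (M (convol f g))) := rfl

variable (hS : 0 < S) (hMmem : ∀ f, MemLp f 2 volume → MemLp (M f) 2 volume)
  (hPmem : ∀ f, MemLp f 2 volume → MemLp (P f) 2 volume)
include hS hMmem hPmem

theorem memLp_layerU (hconv : MemLp (convol f g) 2 volume) :
    MemLp (layerU S P M g f) 2 volume :=
  (hPmem _ (hMmem _ hconv)).normalizedDilation hS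

theorem eLpNorm_layerU_sq_le
    (hMlip : ∀ f h, MemLp f 2 volume → MemLp h 2 volume →
      eLpNorm (M f - M h) 2 volume ≤ ofReal L * eLpNorm (f - h) 2 volume)
    (hPlip : ∀ f h, MemLp f 2 volume → MemLp h 2 volume →
      eLpNorm (P f - P h) 2 volume ≤ ofReal R * eLpNorm (f - h) 2 volume)
    (hM0 : M 0 = 0) (hP0 : P 0 = 0) (hconvL2 : MemLp (convol f g) 2 volume)
    (hconv : eLpNorm (convol f g) 2 volume ^ 2 ≤ ofReal B * eLpNorm f 2 volume ^ 2) :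
    eLpNorm (layerU S P M g f) 2 volume ^ 2
      ≤ ofReal (B * L ^ 2 * R ^ 2) * eLpNorm f 2 volume ^ 2 := by
  have hMconv := hMmem _ hconvL2
  rw [layerU_eq_normalizedDilation, eLpNorm_normalizedDilation (hPmem _ hMconv).1 hS]
  have hPMconv : eLpNorm (P (M (convol f g))) 2 volume
      ≤ ofReal R * (ofReal L * eLpNorm (convol f g) 2 volume) :=
    (eLpNorm_apply_le_of_lipschitz_of_map_zero hPlip hP0 hMconv).trans
      (by gcongr; exact eLpNorm_apply_le_of_lipschitz_of_map_zero hMlip hM0 hconvL2)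
  have hconst : ofReal B * ofReal L ^ 2 * ofReal R ^ 2 ≤ ofReal (B * L ^ 2 * R ^ 2) :=
    calc ofReal B * ofReal L ^ 2 * ofReal R ^ 2
        ≤ ofReal B * ofReal (L ^ 2) * ofReal (R ^ 2) := by
          gcongr <;> exact ENNReal.ofReal_pow_le _ _
      _ ≤ ofReal (B * L ^ 2 * R ^ 2) :=
          (mul_le_mul_left (ENNReal.ofReal_mul_ofReal_le _ _) _).trans
            (ENNReal.ofReal_mul_ofReal_le _ _)
  calc eLpNorm (P (M (convol f g))) 2 volume ^ 2
      ≤ (ofReal R * (ofReal L * eLpNorm (convol f g) 2 volume)) ^ 2 := by gcongr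
    _ = ofReal L ^ 2 * ofReal R ^ 2 * eLpNorm (convol f g) 2 volume ^ 2 := by ring
    _ ≤ ofReal L ^ 2 * ofReal R ^ 2 * (ofReal B * eLpNorm f 2 volume ^ 2) := by gcongr
    _ = ofReal B * ofReal L ^ 2 * ofReal R ^ 2 * eLpNorm f 2 volume ^ 2 := by ring
    _ ≤ ofReal (B * L ^ 2 * R ^ 2) * eLpNorm f 2 volume ^ 2 := by gcongr

end Layer

theorem stmt_4_general {d n : ℕ} {Λ : Fin n → Type}
    (g : (k : Fin n) → Λ k → Ed d → ℂ)
    (hg2 : ∀ k lam, MemLp (g k lam) 2 volume)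
    (B L R S : Fin n → ℝ)
    (hS : ∀ k, 1 ≤ S k)
    (hBessel : ∀ k, ∀ f : Ed d → ℂ, MemLp f 2 volume →
      ∑' lam, eLpNorm (convol f (g k lam)) 2 volume ^ 2 ≤
        ENNReal.ofReal (B k) * eLpNorm f 2 volume ^ 2)
    (M P : Fin n → (Ed d → ℂ) → (Ed d → ℂ))
    (hMmem : ∀ k, ∀ f : Ed d → ℂ, MemLp f 2 volume → MemLp (M k f) 2 volume)
    (hPmem : ∀ k, ∀ f : Ed d → ℂ, MemLp f 2 volume → MemLp (P k f) 2 volume)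
    (hMlip : ∀ k, ∀ f h : Ed d → ℂ, MemLp f 2 volume → MemLp h 2 volume →
      eLpNorm (M k f - M k h) 2 volume ≤ ENNReal.ofReal (L k) * eLpNorm (f - h) 2 volume)
    (hPlip : ∀ k, ∀ f h : Ed d → ℂ, MemLp f 2 volume → MemLp h 2 volume →
      eLpNorm (P k f - P k h) 2 volume ≤ ENNReal.ofReal (R k) * eLpNorm (f - h) 2 volume)
    (hM0 : ∀ k, M k 0 = 0) (hP0 : ∀ k, P k 0 = 0)
    (q : (k : Fin n) → Λ k) (f : Ed d → ℂ) (hf : MemLp f 2 volume) :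
    eLpNorm (Fin.foldl n (fun h k => layerU (S k) (P k) (M k) (g k (q k)) h) f) 2 volume ^ 2 ≤
      ENNReal.ofReal (∏ k, B k * L k ^ 2 * R k ^ 2) * eLpNorm f 2 volume ^ 2 := by
  have hSpos k : 0 < S k := zero_lt_one.trans_le (hS k)
  have hconv k (h : Ed d → ℂ) (hh : MemLp h 2 volume) :
      eLpNorm (convol h (g k (q k))) 2 volume ^ 2
        ≤ ENNReal.ofReal (B k) * eLpNorm h 2 volume ^ 2 :=
    (ENNReal.le_tsum (q k)).trans (hBessel k h hh)
  have hconvL2 k (h : Ed d → ℂ) (hh : MemLp h 2 volume) :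
      MemLp (convol h (g k (q k))) 2 volume :=
    memLp_convol hh (hg2 k (q k)).1 (hconv k h hh)
  calc _ ≤ (∏ k, ENNReal.ofReal (B k * L k ^ 2 * R k ^ 2)) * eLpNorm f 2 volume ^ 2 :=
        Fin.foldl_le_prod_mul _ (MemLp · 2 volume) (eLpNorm · 2 volume ^ 2) _
          (fun k h hh => memLp_layerU (hSpos k) (hMmem k) (hPmem k) (hconvL2 k h hh))
          (fun k h hh => eLpNorm_layerU_sq_le (hSpos k) (hMmem k) (hPmem k) (hMlip k) (hPlip k)
            (hM0 k) (hP0 k) (hconvL2 k h hh) (hconv k h hh)) hf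
    _ ≤ _ := by gcongr; exact ENNReal.prod_ofReal_le_ofReal_prod _ _

/-- Norm bound for iterated layer operators along a path. -/
theorem stmt_4 {d n : ℕ} {Λ : Fin n → Type} [∀ k, Countable (Λ k)]
    (g : (k : Fin n) → Λ k → Ed d → ℂ)
    (hg1 : ∀ k lam, MemLp (g k lam) 1 volume) (hg2 : ∀ k lam, MemLp (g k lam) 2 volume)
    (B L R S : Fin n → ℝ)
    (hB : ∀ k, 0 < B k) (hL : ∀ k, 0 ≤ L k) (hR : ∀ k, 0 ≤ R k) (hS : ∀ k, 1 ≤ S k)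
    (hBessel : ∀ k, ∀ f : Ed d → ℂ, MemLp f 2 volume →
      ∑' lam, eLpNorm (convol f (g k lam)) 2 volume ^ 2 ≤
        ENNReal.ofReal (B k) * eLpNorm f 2 volume ^ 2)
    (M P : Fin n → (Ed d → ℂ) → (Ed d → ℂ))
    (hMmem : ∀ k, ∀ f : Ed d → ℂ, MemLp f 2 volume → MemLp (M k f) 2 volume)
    (hPmem : ∀ k, ∀ f : Ed d → ℂ, MemLp f 2 volume → MemLp (P k f) 2 volume)
    (hMlip : ∀ k, ∀ f h : Ed d → ℂ, MemLp f 2 volume → MemLp h 2 volume →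
      eLpNorm (M k f - M k h) 2 volume ≤ ENNReal.ofReal (L k) * eLpNorm (f - h) 2 volume)
    (hPlip : ∀ k, ∀ f h : Ed d → ℂ, MemLp f 2 volume → MemLp h 2 volume →
      eLpNorm (P k f - P k h) 2 volume ≤ ENNReal.ofReal (R k) * eLpNorm (f - h) 2 volume)
    (hM0 : ∀ k, M k 0 = 0) (hP0 : ∀ k, P k 0 = 0)
    (q : (k : Fin n) → Λ k) (f : Ed d → ℂ) (hf : MemLp f 2 volume) :
    eLpNorm (Fin.foldl n (fun h k => layerU (S k) (P k) (M k) (g k (q k)) h) f) 2 volume ^ 2 ≤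
      ENNReal.ofReal (∏ k, B k * L k ^ 2 * R k ^ 2) * eLpNorm f 2 volume ^ 2 :=
  stmt_4_general g hg2 B L R S hS hBessel M P hMmem hPmem hMlip hPlip hM0 hP0 q f hf
end
end

section
/- Let M ∈ ℝ^{d×d} be a matrix whose entries satisfy |M_{i,j}| ≤ α for all 1 ≤ i, j ≤ d, where α ≥ 0 and dα ≤ 1. Then |det(E − M)| ≥ 1 − dα, where E is the d×d identity matrix. -/
/-!
Let the `j`-th column of `M` be bounded entrywise by `α_j`, with `∑ α_j < 1`. Eliminating the
first row and column of `1 - M` gives `det (1 - M) = (1 - M₀₀) · det (1 - M')`, where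
`1 - M₀₀ ≥ 1 - α₀` and the `j`-th column of `M'` is bounded by `α_j / (1 - α₀)`. Since
`(1 - α₀) (1 - ∑_{j ≠ 0} α_j / (1 - α₀)) = 1 - ∑ α_j`, induction on the size gives
`det (1 - M) ≥ 1 - ∑ α_j`.
-/

open Matrix Finset

namespace Matrix

variable {K : Type*} [Field K] {n : ℕ}

theorem det_eq_mul_det_submatrix_succ_of_col_zero {A : Matrix (Fin (n + 1)) (Fin (n + 1)) K}
    (h : ∀ i : Fin n, A i.succ 0 = 0) : A.det = A 0 0 * (A.submatrix Fin.succ Fin.succ).det := by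
  rw [det_succ_column_zero, Fin.sum_univ_succ]
  simp [h]

theorem det_eq_mul_det_schur (A : Matrix (Fin (n + 1)) (Fin (n + 1)) K) (ha : A 0 0 ≠ 0) :
    A.det = A 0 0 *
      (of fun i j : Fin n => A i.succ j.succ - A i.succ 0 * (A 0 0)⁻¹ * A 0 j.succ).det := by
  set B : Matrix (Fin (n + 1)) (Fin (n + 1)) K :=
    of fun i j => A i j - Fin.cases 0 (fun i => A i.succ 0 * (A 0 0)⁻¹) i * A 0 j
  have hAB : A.det = B.det :=
    det_eq_of_forall_row_eq_smul_add_const (Fin.cases 0 fun i => A i.succ 0 * (A 0 0)⁻¹) 0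
      rfl fun i j => by refine Fin.cases ?_ (fun i => ?_) i <;> simp [B]
  rw [hAB, det_eq_mul_det_submatrix_succ_of_col_zero fun i => by simp [B, ha]]
  congr 1
  simp [B]

end Matrix

section ColumnBound

variable {n : ℕ} {M : Matrix (Fin (n + 1)) (Fin (n + 1)) ℝ} {α : Fin (n + 1) → ℝ}

theorem abs_schur_one_sub_apply_le (hM : ∀ i j, |M i j| ≤ α j) (h0 : α 0 < 1) (i j : Fin n) :
    |M i.succ j.succ + M i.succ 0 * (1 - M 0 0)⁻¹ * M 0 j.succ| ≤ α j.succ / (1 - α 0) := by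
  have hpos : 0 < 1 - α 0 := sub_pos.2 h0
  have hpivot : 1 - α 0 ≤ 1 - M 0 0 := by linarith [le_abs_self (M 0 0), hM 0 0]
  have hα0 : 0 ≤ α 0 := (abs_nonneg _).trans (hM 0 0)
  calc |M i.succ j.succ + M i.succ 0 * (1 - M 0 0)⁻¹ * M 0 j.succ|
      ≤ |M i.succ j.succ| + |M i.succ 0| * (1 - M 0 0)⁻¹ * |M 0 j.succ| := by
        grw [abs_add_le, abs_mul, abs_mul, abs_inv, abs_of_pos (hpos.trans_le hpivot)]
    _ ≤ α j.succ + α 0 * (1 - α 0)⁻¹ * α j.succ := by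
        gcongr
        exacts [hM _ _, (inv_pos.2 (hpos.trans_le hpivot)).le, hM _ _, hM _ _]
    _ = α j.succ / (1 - α 0) := by
        field_simp
        ring

theorem one_sub_sum_le_det_one_sub {n : ℕ} (M : Matrix (Fin n) (Fin n) ℝ) (α : Fin n → ℝ)
    (hM : ∀ i j, |M i j| ≤ α j) (hα : ∑ j, α j < 1) : 1 - ∑ j, α j ≤ (1 - M).det := by
  induction n with
  | zero => simp
  | succ n ih =>
    have hα_nonneg : ∀ j, 0 ≤ α j := fun j => (abs_nonneg _).trans (hM 0 j)
    rw [Fin.sum_univ_succ] at hα ⊢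
    have hα0 : α 0 < 1 := by linarith [sum_nonneg (s := univ) fun j _ => hα_nonneg (Fin.succ j)]
    have hgap : 1 - α 0 ≠ 0 := (sub_pos.2 hα0).ne'
    have hpivot : 1 - α 0 ≤ 1 - M 0 0 := by linarith [le_abs_self (M 0 0), hM 0 0]
    set M' : Matrix (Fin n) (Fin n) ℝ :=
      of fun i j => M i.succ j.succ + M i.succ 0 * (1 - M 0 0)⁻¹ * M 0 j.succ
    set α' : Fin n → ℝ := fun j => α j.succ / (1 - α 0)
    have hsum : ∑ j, α' j = (∑ j : Fin n, α j.succ) / (1 - α 0) := by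
      simp [α', Finset.sum_div]
    have hα' : ∑ j, α' j < 1 := by
      rw [hsum, div_lt_one (sub_pos.2 hα0)]
      linarith
    have hdet : (1 - M).det = (1 - M 0 0) * (1 - M').det := by
      rw [det_eq_mul_det_schur _ (by simp; linarith)]
      congr 2
      ext i j
      simp only [M', of_apply, Matrix.sub_apply, one_apply, Fin.succ_inj, Fin.succ_ne_zero,
        (Fin.succ_ne_zero _).symm, ↓reduceIte, zero_sub, neg_mul, mul_neg, neg_neg]
      ring
    calc 1 - (α 0 + ∑ j : Fin n, α j.succ) = (1 - α 0) * (1 - ∑ j, α' j) := by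
          rw [hsum]
          field_simp
          ring
      _ ≤ (1 - M 0 0) * (1 - M').det :=
          mul_le_mul hpivot (ih M' α' (abs_schur_one_sub_apply_le hM hα0) hα')
            (by linarith) (by linarith)
      _ = (1 - M).det := hdet.symm

end ColumnBound

theorem stmt_13_general {d : ℕ} (M : Matrix (Fin d) (Fin d) ℝ) (α : ℝ)
    (hM : ∀ i j, |M i j| ≤ α) (hdα : (d : ℝ) * α ≤ 1) :
    1 - (d : ℝ) * α ≤ |(1 - M).det| := by
  rcases hdα.lt_or_eq with hlt | heq
  · have hsum : ∑ _j : Fin d, α = d * α := by simp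
    calc 1 - d * α ≤ (1 - M).det :=
          hsum ▸ one_sub_sum_le_det_one_sub M (fun _ => α) hM (hsum ▸ hlt)
      _ ≤ |(1 - M).det| := le_abs_self _
  · simp [heq]

/-- If all entries of `M` are bounded by `α` with `d·α ≤ 1`, then `|det(E − M)| ≥ 1 − d·α`. -/
theorem stmt_13 {d : ℕ} (M : Matrix (Fin d) (Fin d) ℝ) (α : ℝ) (hα : 0 ≤ α)
    (hM : ∀ i j, |M i j| ≤ α) (hdα : (d : ℝ) * α ≤ 1) :
    1 - (d : ℝ) * α ≤ |(1 - M).det| :=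
  stmt_13_general M α hM hdα
end

section
/- Let ω : ℝ^d → ℝ be continuous and let τ : ℝ^d → ℝ^d be continuously differentiable with ‖Dτ‖_∞ := sup_{x∈ℝ^d} max_{i,j} |(Dτ)(x)_{i,j}| ≤ 1/(2d), where Dτ is the Jacobian matrix of τ. Then for every f ∈ L²(ℝ^d), the deformed function (F_{τ,ω}f)(x) := e^{2πiω(x)} f(x − τ(x)) belongs to L²(ℝ^d) and satisfies ‖F_{τ,ω}f‖₂² ≤ 2‖f‖₂². -/
/-!
The map `φ x = x - τ x` has Jacobian `1 - Dτ`, whose entries are bounded by `ε = 1/(2d)`.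
Eliminating the first row and column of `1 - A` leaves `1 - A'` where the Schur complement `A'`
has entries bounded by `ε + ε² / (1 - ε) = ε / (1 - ε)`; since
`(1 - ε) (1 - n ε / (1 - ε)) = 1 - (n + 1) ε`, induction on the size gives
`det (1 - Dτ) ≥ 1 - d ε = 1/2`. The same entrywise bound gives `‖Dτ‖ ≤ d ε = 1/2`, so `τ` is a
contraction and `φ` is injective. The change of variables formula then yields
`volume.map φ ≤ 2 • volume`, which bounds the `L²` norm of `f ∘ φ`; the phase factor has
modulus one.
-/

open MeasureTheory
open scoped ENNReal FourierTransform

noncomputable section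

open Matrix
open scoped NNReal

theorem Matrix.det_one_sub_eq_mul_det_one_sub_succ {K : Type*} [Field K] {n : ℕ}
    (A : Matrix (Fin (n + 1)) (Fin (n + 1)) K) (h : A 0 0 ≠ 1) :
    (1 - A).det = (1 - A 0 0) * (1 - of fun i j : Fin n =>
      A i.succ j.succ + A i.succ 0 * A 0 j.succ / (1 - A 0 0)).det := by
  have hp : 1 - A 0 0 ≠ 0 := sub_ne_zero.mpr h.symm
  set c : Fin (n + 1) → K := Fin.cons 0 fun i => A i.succ 0 / (1 - A 0 0)
  set B : Matrix (Fin (n + 1)) (Fin (n + 1)) K := of fun i j => (1 - A) i j + c i * (1 - A) 0 j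
  rw [det_eq_of_forall_row_eq_smul_add_const (B := B) (-c) 0 (by simp [c])
    (fun i j => by simp [B, c]), det_succ_column_zero, Fin.sum_univ_succ]
  have hcol : ∀ i : Fin n, B i.succ 0 = 0 := fun i => by
    simp [B, c, one_apply_ne (Fin.succ_ne_zero i)]
    field_simp
    ring
  simp only [hcol, mul_zero, zero_mul, Finset.sum_const_zero, add_zero]
  congr 2
  · simp [B, c]
  · ext i j
    simp [B, c, one_apply, (Fin.succ_ne_zero j).symm]
    ring

theorem Matrix.one_sub_mul_le_det_one_sub {n : ℕ} (A : Matrix (Fin n) (Fin n) ℝ) {ε : ℝ}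
    (hA : ∀ i j, |A i j| ≤ ε) (hε : n * ε < 1) : 1 - n * ε ≤ (1 - A).det := by
  induction n generalizing ε with
  | zero => simp
  | succ n ih =>
    push_cast at hε ⊢
    have hε0 : 0 ≤ ε := (abs_nonneg _).trans (hA 0 0)
    have hε1 : 0 < 1 - ε := by nlinarith [(Nat.cast_nonneg n : (0 : ℝ) ≤ n)]
    have hpivot : 1 - ε ≤ 1 - A 0 0 := by linarith [le_abs_self (A 0 0), hA 0 0]
    have hschur : ∀ i j : Fin n,
        |A i.succ j.succ + A i.succ 0 * A 0 j.succ / (1 - A 0 0)| ≤ ε / (1 - ε) := by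
      intro i j
      calc _ ≤ |A i.succ j.succ| + |A i.succ 0| * |A 0 j.succ| / |1 - A 0 0| := by
            rw [← abs_mul, ← abs_div]; exact abs_add_le _ _
        _ ≤ ε + ε * ε / (1 - ε) := by
            rw [abs_of_pos (hε1.trans_le hpivot)]
            gcongr
            all_goals exact hA _ _
        _ = ε / (1 - ε) := by field_simp; ring
    have hdet := ih _ hschur (by rw [mul_div_assoc', div_lt_one hε1]; linarith)
    rw [det_one_sub_eq_mul_det_one_sub_succ A (by linarith)]
    calc 1 - (n + 1) * ε = (1 - ε) * (1 - n * (ε / (1 - ε))) := by field_simp; ring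
      _ ≤ _ := by
        apply mul_le_mul hpivot hdet _ (by linarith)
        rw [mul_div_assoc', sub_nonneg, div_le_one hε1]; linarith

namespace EuclideanSpace

variable {ι : Type*} [Fintype ι] [DecidableEq ι]

theorem apply_eq_sum_mul (L : EuclideanSpace ℝ ι →L[ℝ] EuclideanSpace ℝ ι)
    (v : EuclideanSpace ℝ ι) (i : ι) : L v i = ∑ j, L (single j 1) i * v j := by
  have := congrFun (LinearMap.toMatrix_mulVec_repr
    (basisFun ι ℝ).toBasis (basisFun ι ℝ).toBasis L v) i
  simpa [mulVec, dotProduct, LinearMap.toMatrix_apply] using this.symm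

theorem opNorm_le_of_abs_apply_single_le
    (L : EuclideanSpace ℝ ι →L[ℝ] EuclideanSpace ℝ ι) {ε : ℝ}
    (hL : ∀ i j, |L (single j 1) i| ≤ ε) : ‖L‖ ≤ Fintype.card ι * ε := by
  have hnonneg : 0 ≤ Fintype.card ι * ε := by
    rcases isEmpty_or_nonempty ι with hι | ⟨⟨i⟩⟩
    · simp
    · have := (abs_nonneg _).trans (hL i i)
      positivity
  have hentry : ∀ i j, L (single j 1) i ^ 2 ≤ ε ^ 2 := fun i j =>
    sq_le_sq' (abs_le.mp (hL i j)).1 (abs_le.mp (hL i j)).2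
  refine ContinuousLinearMap.opNorm_le_bound _ hnonneg fun v => ?_
  have hrow : ∀ i, L v i ^ 2 ≤ Fintype.card ι * ε ^ 2 * ‖v‖ ^ 2 := fun i => by
    calc L v i ^ 2 ≤ (∑ j, L (single j 1) i ^ 2) * ∑ j, v j ^ 2 := by
          rw [apply_eq_sum_mul]
          exact Finset.sum_mul_sq_le_sq_mul_sq _ _ _
      _ ≤ (∑ _j : ι, ε ^ 2) * ‖v‖ ^ 2 := by
          rw [real_norm_sq_eq]
          exact mul_le_mul_of_nonneg_right (Finset.sum_le_sum fun j _ => hentry i j)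
            (by positivity)
      _ = _ := by simp
  refine le_of_sq_le_sq ?_ (by positivity)
  calc ‖L v‖ ^ 2 = ∑ i, L v i ^ 2 := real_norm_sq_eq _
    _ ≤ ∑ _i : ι, Fintype.card ι * ε ^ 2 * ‖v‖ ^ 2 := Finset.sum_le_sum fun i _ => hrow i
    _ = _ := by simp; ring

end EuclideanSpace

theorem EuclideanSpace.one_sub_mul_le_det_id_sub {n : ℕ}
    (L : EuclideanSpace ℝ (Fin n) →L[ℝ] EuclideanSpace ℝ (Fin n)) {ε : ℝ}
    (hL : ∀ i j, |L (single j 1) i| ≤ ε) (hε : n * ε < 1) :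
    1 - n * ε ≤ (ContinuousLinearMap.id ℝ _ - L).det := by
  set b := (basisFun (Fin n) ℝ).toBasis
  rw [ContinuousLinearMap.det, ← LinearMap.det_toMatrix b, ContinuousLinearMap.toLinearMap_sub,
    map_sub, ContinuousLinearMap.coe_id, LinearMap.toMatrix_id]
  exact one_sub_mul_le_det_one_sub _
    (fun i j => by simpa [b, LinearMap.toMatrix_apply] using hL i j) hε

theorem LipschitzWith.injective_id_sub {E : Type*} [NormedAddCommGroup E] {K : ℝ≥0}
    {τ : E → E} (hτ : LipschitzWith K τ) (hK : K < 1) : Function.Injective fun x => x - τ x :=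
  have hdiff : (fun x => x - τ x) - id = -τ := by funext x; simp
  (AntilipschitzWith.id.add_sub_lipschitzWith (hdiff ▸ hτ.neg) (by simpa using hK)).injective

theorem MeasureTheory.Measure.map_le_smul_of_le_abs_det {E : Type*} [NormedAddCommGroup E]
    [NormedSpace ℝ E] [FiniteDimensional ℝ E] [MeasurableSpace E] [BorelSpace E]
    (μ : Measure E) [μ.IsAddHaarMeasure] {φ : E → E} {φ' : E → E →L[ℝ] E}
    (hφ : ∀ x, HasFDerivAt φ (φ' x) x) (hinj : Function.Injective φ) {c : ℝ≥0∞} (hc : c ≠ 0)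
    (hdet : ∀ x, c ≤ ENNReal.ofReal |(φ' x).det|) : μ.map φ ≤ c⁻¹ • μ := by
  have hmeas : Measurable φ :=
    (continuous_iff_continuousAt.mpr fun x => (hφ x).continuousAt).measurable
  refine Measure.le_iff.mpr fun s hs => ?_
  rw [Measure.map_apply hmeas hs, Measure.smul_apply, smul_eq_mul, ← ENNReal.div_eq_inv_mul,
    ENNReal.le_div_iff_mul_le (.inl hc) (.inl ((hdet 0).trans_lt ENNReal.ofReal_lt_top).ne),
    mul_comm]
  calc c * μ (φ ⁻¹' s) = ∫⁻ _ in φ ⁻¹' s, c ∂μ := (setLIntegral_const _ _).symm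
    _ ≤ ∫⁻ x in φ ⁻¹' s, ENNReal.ofReal |(φ' x).det| ∂μ := lintegral_mono fun x => hdet x
    _ = μ (φ '' (φ ⁻¹' s)) := lintegral_abs_det_fderiv_eq_addHaar_image μ (hmeas hs)
          (fun x _ => (hφ x).hasFDerivWithinAt) hinj.injOn
    _ ≤ μ s := measure_mono (Set.image_preimage_subset φ s)

theorem EuclideanSpace.map_id_sub_le_smul {n : ℕ}
    {τ : EuclideanSpace ℝ (Fin n) → EuclideanSpace ℝ (Fin n)} (hτ : Differentiable ℝ τ) {ε : ℝ}
    (hDτ : ∀ x i j, |fderiv ℝ τ x (single j 1) i| ≤ ε) (hε : n * ε < 1) :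
    volume.map (fun x => x - τ x) ≤ (ENNReal.ofReal (1 - n * ε))⁻¹ • volume := by
  have hinj : Function.Injective fun x => x - τ x := by
    refine (lipschitzWith_of_nnnorm_fderiv_le hτ fun x => ?_).injective_id_sub
      (Real.toNNReal_lt_one.mpr hε)
    rw [← Real.toNNReal_coe (r := ‖fderiv ℝ τ x‖₊), coe_nnnorm]
    simpa using Real.toNNReal_le_toNNReal (opNorm_le_of_abs_apply_single_le _ (hDτ x))
  refine Measure.map_le_smul_of_le_abs_det volume (φ := fun x => x - τ x)
    (fun x => (hasFDerivAt_id x).sub (hτ x).hasFDerivAt) hinj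
    (ENNReal.ofReal_pos.mpr (by linarith)).ne' fun x => ENNReal.ofReal_le_ofReal ?_
  exact (one_sub_mul_le_det_id_sub _ (hDτ x) hε).trans (le_abs_self _)

theorem MeasureTheory.eLpNorm_comp_le_of_map_le_smul {α β F : Type*} [MeasurableSpace α]
    [MeasurableSpace β] [NormedAddCommGroup F] {μ : Measure α} {ν : Measure β} {φ : α → β}
    (hφ : AEMeasurable φ μ) {C : ℝ≥0∞} (hmap : μ.map φ ≤ C • ν) {f : β → F}
    (hf : AEStronglyMeasurable f ν) (p : ℝ≥0∞) :
    eLpNorm (f ∘ φ) p μ ≤ C ^ (1 / p).toReal * eLpNorm f p ν := by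
  rw [← eLpNorm_map_measure (hf.mono_ac (Measure.absolutelyContinuous_of_le_smul hmap)) hφ]
  exact eLpNorm_le_of_measure_le_smul hmap

theorem MeasureTheory.MemLp.mul_comp_of_map_le_smul {α β R : Type*} [MeasurableSpace α]
    [MeasurableSpace β] [NormedRing R] {μ : Measure α} {ν : Measure β} {φ : α → β}
    (hφ : AEMeasurable φ μ) {C : ℝ≥0∞} (hC : C ≠ ∞) (hmap : μ.map φ ≤ C • ν) {p : ℝ≥0∞}
    {f : β → R} (hf : MemLp f p ν) {u : α → R} (hu : AEStronglyMeasurable u μ)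
    (hu1 : ∀ x, ‖u x‖ ≤ 1) :
    MemLp (fun x => u x * f (φ x)) p μ ∧
      eLpNorm (fun x => u x * f (φ x)) p μ ≤ C ^ (1 / p).toReal * eLpNorm f p ν := by
  have hfφ : MemLp (f ∘ φ) p μ := (hf.of_measure_le_smul hC hmap).comp_of_map hφ
  have hle : ∀ x, ‖u x * f (φ x)‖ ≤ ‖(f ∘ φ) x‖ := fun x =>
    (norm_mul_le _ _).trans (mul_le_of_le_one_left (norm_nonneg _) (hu1 x))
  exact ⟨hfφ.of_le (hu.mul hfφ.1) (ae_of_all _ hle),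
    (eLpNorm_mono hle).trans (eLpNorm_comp_le_of_map_le_smul hφ hmap hf.1 p)⟩

/-- Time-frequency deformations of L² functions stay in L², with energy at most doubled. -/
theorem stmt_14 {d : ℕ} (ω : Ed d → ℝ) (hω : Continuous ω)
    (τ : Ed d → Ed d) (hτ : ContDiff ℝ 1 τ)
    (hDτ : ∀ (x : Ed d) (i j : Fin d),
      |fderiv ℝ τ x (EuclideanSpace.single j 1) i| ≤ 1 / (2 * (d : ℝ))) :
    ∀ f : Ed d → ℂ, MemLp f 2 volume →
      MemLp (fun x => Complex.exp (((2 * Real.pi * ω x : ℝ) : ℂ) * Complex.I) * f (x - τ x))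
        2 volume ∧
      eLpNorm (fun x => Complex.exp (((2 * Real.pi * ω x : ℝ) : ℂ) * Complex.I) * f (x - τ x))
          2 volume ^ 2 ≤
        2 * eLpNorm f 2 volume ^ 2 := by
  intro f hf
  have hdε : (d : ℝ) * (1 / (2 * d)) ≤ 1 / 2 := by
    rcases eq_or_ne (d : ℝ) 0 with h | h
    · simp [h]
    · rw [mul_one_div, div_mul_cancel_right₀ h]; norm_num
  set C := (ENNReal.ofReal (1 - d * (1 / (2 * d))))⁻¹
  have hC : C ≤ 2 := by
    rw [ENNReal.inv_le_iff_inv_le, ← ENNReal.ofReal_ofNat, ← ENNReal.ofReal_inv_of_pos two_pos]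
    exact ENNReal.ofReal_le_ofReal (by linarith)
  have hmap := EuclideanSpace.map_id_sub_le_smul (hτ.differentiable one_ne_zero) hDτ
    (by linarith)
  obtain ⟨hmem, hnorm⟩ := hf.mul_comp_of_map_le_smul (φ := fun x => x - τ x)
    (continuous_id.sub hτ.continuous).aemeasurable (ne_top_of_le_ne_top (by simp) hC) hmap
    (u := fun x => Complex.exp (((2 * Real.pi * ω x : ℝ) : ℂ) * Complex.I))
    (Continuous.aestronglyMeasurable (by fun_prop))
    fun x => (Complex.norm_exp_ofReal_mul_I _).le
  refine ⟨hmem, ?_⟩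
  calc _ ≤ (C ^ (1 / (2 : ℝ≥0∞)).toReal * eLpNorm f 2 volume) ^ 2 := by gcongr
    _ = C * eLpNorm f 2 volume ^ 2 := by
        rw [mul_pow, ← ENNReal.rpow_natCast, ← ENNReal.rpow_mul]; norm_num
    _ ≤ 2 * eLpNorm f 2 volume ^ 2 := by gcongr
end
end
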